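/- Under the stated assumptions, suppose the tangential velocity satisfies the asymptotically uniform redistribution equation ∂_s v_T(u,t) = κ(u,t) v_N(u,t) − (1/L(Γ_t)) ∫₀¹ κ v_N g du + (L(Γ_t)/g(u,t) − 1) ω with a constant ω > 0, and suppose the solution exists for all t ≥ 0. Then the relative local length satisfies ∂_t ( g(u,t)/L(Γ_t) ) = ω (1 − g(u,t)/L(Γ_t)), and consequently g(u,t)/L(Γ_t) → 1 as t → ∞, uniformly with respect to u ∈ [0,1]. -/

import Mathlib

noncomputable section

open Real

/-- The cross product on `EuclideanSpace ℝ (Fin 3)`. -/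
def cross3 (a b : EuclideanSpace ℝ (Fin 3)) : EuclideanSpace ℝ (Fin 3) :=
  (WithLp.equiv 2 (Fin 3 → ℝ)).symm
    ![a 1 * b 2 - a 2 * b 1, a 2 * b 0 - a 0 * b 2, a 0 * b 1 - a 1 * b 0]

/-- Partial derivative with respect to the first (spatial) variable `u`. -/
def pu {α : Type*} [NormedAddCommGroup α] [NormedSpace ℝ α]
    (f : ℝ × ℝ → α) (p : ℝ × ℝ) : α :=
  deriv (fun u => f (u, p.2)) p.1

/-- Partial derivative with respect to the second (time) variable `t`. -/
def pt {α : Type*} [NormedAddCommGroup α] [NormedSpace ℝ α]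
    (f : ℝ × ℝ → α) (p : ℝ × ℝ) : α :=
  deriv (fun t => f (p.1, t)) p.2

/-- Arc-length derivative `∂_s = g⁻¹ ∂_u` along the curves parametrized by `X`. -/
def Ds (X : ℝ × ℝ → EuclideanSpace ℝ (Fin 3)) {α : Type*}
    [NormedAddCommGroup α] [NormedSpace ℝ α] (f : ℝ × ℝ → α) (p : ℝ × ℝ) : α :=
  ‖pu X p‖⁻¹ • pu f p

open MeasureTheory intervalIntegral RealInnerProductSpace

namespace AUXaur

variable {α : Type*} [NormedAddCommGroup α] [NormedSpace ℝ α]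

lemma hasDerivAt_slice1 {f : ℝ × ℝ → α} {p : ℝ × ℝ} (hf : DifferentiableAt ℝ f p) :
    HasDerivAt (fun u => f (u, p.2)) (fderiv ℝ f p (1, 0)) p.1 := by
  have h : HasDerivAt (fun u : ℝ => (u, p.2)) ((1:ℝ), (0:ℝ)) p.1 :=
    (hasDerivAt_id p.1).prodMk (hasDerivAt_const _ _)
  simpa [Function.comp_def] using hf.hasFDerivAt.comp_hasDerivAt p.1 h

lemma hasDerivAt_slice2 {f : ℝ × ℝ → α} {p : ℝ × ℝ} (hf : DifferentiableAt ℝ f p) :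
    HasDerivAt (fun t => f (p.1, t)) (fderiv ℝ f p (0, 1)) p.2 := by
  have h : HasDerivAt (fun t : ℝ => (p.1, t)) ((0:ℝ), (1:ℝ)) p.2 :=
    (hasDerivAt_const _ _).prodMk (hasDerivAt_id p.2)
  simpa [Function.comp_def] using hf.hasFDerivAt.comp_hasDerivAt p.2 h

lemma pu_eq {f : ℝ × ℝ → α} {p : ℝ × ℝ} (hf : DifferentiableAt ℝ f p) :
    pu f p = fderiv ℝ f p (1, 0) := (hasDerivAt_slice1 hf).deriv

lemma pt_eq {f : ℝ × ℝ → α} {p : ℝ × ℝ} (hf : DifferentiableAt ℝ f p) :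
    pt f p = fderiv ℝ f p (0, 1) := (hasDerivAt_slice2 hf).deriv

lemma contDiff_fderiv_apply {f : ℝ × ℝ → α} (hf : ContDiff ℝ (⊤ : ℕ∞) f) (v : ℝ × ℝ) :
    ContDiff ℝ (⊤ : ℕ∞) (fun p => fderiv ℝ f p v) :=
  (hf.fderiv_right (by simp)).clm_apply contDiff_const

lemma second_symm {f : ℝ × ℝ → α} (hf : ContDiff ℝ (⊤ : ℕ∞) f) (p v w : ℝ × ℝ) :
    fderiv ℝ (fun q => fderiv ℝ f q v) p w = fderiv ℝ (fun q => fderiv ℝ f q w) p v := by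
  have hd : Differentiable ℝ (fderiv ℝ f) := (hf.fderiv_right (m := (⊤ : ℕ∞)) (by simp)).differentiable (by simp)
  have h1 : ∀ (v : ℝ × ℝ), fderiv ℝ (fun q => fderiv ℝ f q v) p
      = (fderiv ℝ (fderiv ℝ f) p).flip v := by
    intro v
    rw [fderiv_clm_apply (hd p) (differentiableAt_const v)]
    simp
  rw [h1 v, h1 w]
  simp only [ContinuousLinearMap.flip_apply]
  exact second_derivative_symmetric
    (fun y => ((hf.differentiable (by simp)) y).hasFDerivAt) (hd p).hasFDerivAt w v

lemma inner_cross3_left (a b : EuclideanSpace ℝ (Fin 3)) : ⟪a, cross3 a b⟫ = 0 := by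
  simp [cross3, PiLp.inner_apply, Fin.sum_univ_three, WithLp.equiv_symm_apply]
  ring

lemma inner_cross3_right (a b : EuclideanSpace ℝ (Fin 3)) : ⟪b, cross3 a b⟫ = 0 := by
  simp [cross3, PiLp.inner_apply, Fin.sum_univ_three, WithLp.equiv_symm_apply]
  ring

lemma contDiff_cross3 {f g : ℝ × ℝ → EuclideanSpace ℝ (Fin 3)}
    (hf : ContDiff ℝ (⊤ : ℕ∞) f) (hg : ContDiff ℝ (⊤ : ℕ∞) g) :
    ContDiff ℝ (⊤ : ℕ∞) (fun p => cross3 (f p) (g p)) := by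
  have hc : ∀ (h : ℝ × ℝ → EuclideanSpace ℝ (Fin 3)), ContDiff ℝ (⊤ : ℕ∞) h →
      ∀ i, ContDiff ℝ (⊤ : ℕ∞) (fun p => h p i) := fun h hh i =>
    (EuclideanSpace.proj i : EuclideanSpace ℝ (Fin 3) →L[ℝ] ℝ).contDiff.comp hh
  have key : (fun p => cross3 (f p) (g p)) = fun p =>
      (EuclideanSpace.equiv (Fin 3) ℝ).symm
        ![f p 1 * g p 2 - f p 2 * g p 1, f p 2 * g p 0 - f p 0 * g p 2,
          f p 0 * g p 1 - f p 1 * g p 0] := rfl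
  rw [key]
  apply (EuclideanSpace.equiv (Fin 3) ℝ).symm.contDiff.comp
  apply contDiff_pi.2
  intro i
  fin_cases i <;> simp <;>
    exact ((hc f hf _).mul (hc g hg _)).sub ((hc f hf _).mul (hc g hg _))

end AUXaur

open AUXaur in
theorem asymptotically_uniform_redistribution
    (X : ℝ × ℝ → EuclideanSpace ℝ (Fin 3)) (vN vB vT : ℝ × ℝ → ℝ)
    (g κ τ : ℝ × ℝ → ℝ) (T N B : ℝ × ℝ → EuclideanSpace ℝ (Fin 3))
    (hX : ContDiff ℝ (⊤ : ℕ∞) X) (hXper : ∀ u t : ℝ, X (u + 1, t) = X (u, t))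
    (hvN : ContDiff ℝ (⊤ : ℕ∞) vN) (hvNper : ∀ u t : ℝ, vN (u + 1, t) = vN (u, t))
    (hvB : ContDiff ℝ (⊤ : ℕ∞) vB) (hvBper : ∀ u t : ℝ, vB (u + 1, t) = vB (u, t))
    (hvT : ContDiff ℝ (⊤ : ℕ∞) vT) (hvTper : ∀ u t : ℝ, vT (u + 1, t) = vT (u, t))
    (hg : ∀ p : ℝ × ℝ, g p = ‖pu X p‖) (hgpos : ∀ p : ℝ × ℝ, 0 < g p)
    (hT : ∀ p : ℝ × ℝ, T p = Ds X X p)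
    (hκ : ∀ p : ℝ × ℝ, κ p = ‖Ds X T p‖) (hκpos : ∀ p : ℝ × ℝ, 0 < κ p)
    (hN : ∀ p : ℝ × ℝ, N p = (κ p)⁻¹ • Ds X T p)
    (hB : ∀ p : ℝ × ℝ, B p = cross3 (T p) (N p))
    (hτ : ∀ p : ℝ × ℝ, τ p = -(inner ℝ (Ds X B p) (N p) : ℝ))
    (hflow : ∀ p : ℝ × ℝ, pt X p = vN p • N p + vB p • B p + vT p • T p)
    (L : ℝ → ℝ)
    (hL : ∀ t : ℝ, L t = ∫ u in (0:ℝ)..1, g (u, t))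
    (ω : ℝ) (hω : 0 < ω)
    (hredis : ∀ p : ℝ × ℝ,
      Ds X vT p = κ p * vN p
        - (L p.2)⁻¹ * (∫ u in (0:ℝ)..1, κ (u, p.2) * vN (u, p.2) * g (u, p.2))
        + (L p.2 / g p - 1) * ω) :
    (∀ u t : ℝ, HasDerivAt (fun t' => g (u, t') / L t')
        (ω * (1 - g (u, t) / L t)) t)
    ∧ TendstoUniformlyOn (fun (t : ℝ) (u : ℝ) => g (u, t) / L t)
        (fun _ => 1) Filter.atTop (Set.Icc (0:ℝ) 1) := by
  have hXd : Differentiable ℝ X := hX.differentiable (by simp)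
  set Xu : ℝ × ℝ → EuclideanSpace ℝ (Fin 3) := fun p => fderiv ℝ X p (1, 0) with hXudef
  have hXusm : ContDiff ℝ (⊤ : ℕ∞) Xu := contDiff_fderiv_apply hX _
  have hpuX : ∀ p, pu X p = Xu p := fun p => pu_eq (hXd p)
  have hgne : ∀ p, g p ≠ 0 := fun p => (hgpos p).ne'
  have hXune : ∀ p, Xu p ≠ 0 := by
    intro p h
    have h2 := hgpos p
    rw [hg p, hpuX p, h] at h2
    simp at h2
  have hgfun : g = fun p => ‖Xu p‖ := funext fun p => by rw [hg p, hpuX p]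
  have hgsm : ContDiff ℝ (⊤ : ℕ∞) g := by rw [hgfun]; exact hXusm.norm ℝ hXune
  have hgd : Differentiable ℝ g := hgsm.differentiable (by simp)
  have hXunorm : ∀ p, ‖Xu p‖ = g p := fun p => by rw [hgfun]
  -- T
  have hTfun : T = fun p => (g p)⁻¹ • Xu p := funext fun p => by
    rw [hT p]; unfold Ds; rw [hg p, hpuX p]
  have hTsm : ContDiff ℝ (⊤ : ℕ∞) T := by rw [hTfun]; exact (hgsm.inv hgne).smul hXusm
  have hTd : Differentiable ℝ T := hTsm.differentiable (by simp)
  set Tu : ℝ × ℝ → EuclideanSpace ℝ (Fin 3) := fun p => fderiv ℝ T p (1, 0) with hTudef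
  have hTusm : ContDiff ℝ (⊤ : ℕ∞) Tu := contDiff_fderiv_apply hTsm _
  have hpuT : ∀ p, pu T p = Tu p := fun p => pu_eq (hTd p)
  -- DsT, κ, N
  set DsT : ℝ × ℝ → EuclideanSpace ℝ (Fin 3) := fun p => (g p)⁻¹ • Tu p with hDsTdef
  have hDsTeq : ∀ p, Ds X T p = DsT p := fun p => by
    unfold Ds; simp only [hDsTdef]; rw [hg p, hpuT p]
  have hDsTsm : ContDiff ℝ (⊤ : ℕ∞) DsT := (hgsm.inv hgne).smul hTusm
  have hκfun : κ = fun p => ‖DsT p‖ := funext fun p => by rw [hκ p, hDsTeq p]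
  have hκne : ∀ p, κ p ≠ 0 := fun p => (hκpos p).ne'
  have hDsTne : ∀ p, DsT p ≠ 0 := by
    intro p h
    have h2 := hκpos p
    rw [hκ p, hDsTeq p, h] at h2
    simp at h2
  have hκsm : ContDiff ℝ (⊤ : ℕ∞) κ := by rw [hκfun]; exact hDsTsm.norm ℝ hDsTne
  have hDsTnorm : ∀ p, ‖DsT p‖ = κ p := fun p => by rw [hκfun]
  have hNfun : N = fun p => (κ p)⁻¹ • DsT p := funext fun p => by rw [hN p, hDsTeq p]
  have hNsm : ContDiff ℝ (⊤ : ℕ∞) N := by rw [hNfun]; exact (hκsm.inv hκne).smul hDsTsm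
  have hNd : Differentiable ℝ N := hNsm.differentiable (by simp)
  set Nu : ℝ × ℝ → EuclideanSpace ℝ (Fin 3) := fun p => fderiv ℝ N p (1, 0) with hNudef
  -- B
  have hBfun : B = fun p => cross3 (T p) (N p) := funext fun p => hB p
  have hBsm : ContDiff ℝ (⊤ : ℕ∞) B := by rw [hBfun]; exact contDiff_cross3 hTsm hNsm
  have hBd : Differentiable ℝ B := hBsm.differentiable (by simp)
  set Bu : ℝ × ℝ → EuclideanSpace ℝ (Fin 3) := fun p => fderiv ℝ B p (1, 0) with hBudef
  -- pointwise identities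
  have hTnorm : ∀ p, ‖T p‖ = 1 := by
    intro p
    simp only [hTfun]
    rw [norm_smul, Real.norm_eq_abs, hXunorm p, abs_of_pos (inv_pos.2 (hgpos p)), inv_mul_cancel₀ (hgne p)]
  have hNnorm : ∀ p, ‖N p‖ = 1 := by
    intro p
    simp only [hNfun]
    rw [norm_smul, Real.norm_eq_abs, hDsTnorm p, abs_of_pos (inv_pos.2 (hκpos p)), inv_mul_cancel₀ (hκne p)]
  have hTT : ∀ p, (⟪T p, T p⟫ : ℝ) = 1 := by
    intro p; rw [real_inner_self_eq_norm_sq, hTnorm p]; norm_num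
  have hNN : ∀ p, (⟪N p, N p⟫ : ℝ) = 1 := by
    intro p; rw [real_inner_self_eq_norm_sq, hNnorm p]; norm_num
  have hTuN : ∀ p, Tu p = (g p * κ p) • N p := by
    intro p
    simp only [hNfun, hDsTdef, smul_smul]
    rw [show g p * κ p * ((κ p)⁻¹ * (g p)⁻¹) = 1 by rw [← mul_inv, mul_comm (κ p) (g p)]; exact mul_inv_cancel₀ (mul_ne_zero (hgne p) (hκne p)), one_smul]
  have hgκne : ∀ p, g p * κ p ≠ 0 := fun p => mul_ne_zero (hgne p) (hκne p)
  -- derivative of constant inner products in u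
  have hinner0 : ∀ (f h : ℝ × ℝ → EuclideanSpace ℝ (Fin 3)), Differentiable ℝ f →
      Differentiable ℝ h → ∀ (c : ℝ), (∀ q, (⟪f q, h q⟫ : ℝ) = c) → ∀ p,
      (⟪f p, fderiv ℝ h p (1, 0)⟫ : ℝ) + ⟪fderiv ℝ f p (1, 0), h p⟫ = 0 := by
    intro f h hf hh c hc p
    have h1 : HasDerivAt (fun u => (⟪f (u, p.2), h (u, p.2)⟫ : ℝ))
        (⟪f p, fderiv ℝ h p (1, 0)⟫ + ⟪fderiv ℝ f p (1, 0), h p⟫) p.1 :=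
      (hasDerivAt_slice1 (hf p)).inner ℝ (hasDerivAt_slice1 (hh p))
    have h2 : HasDerivAt (fun u => (⟪f (u, p.2), h (u, p.2)⟫ : ℝ)) 0 p.1 := by
      have e : (fun u => (⟪f (u, p.2), h (u, p.2)⟫ : ℝ)) = fun _ => c :=
        funext fun u => hc _
      rw [e]; exact hasDerivAt_const _ _
    exact h1.unique h2
  have hTTu : ∀ p, (⟪T p, Tu p⟫ : ℝ) = 0 := by
    intro p
    have h0 := hinner0 T T hTd hTd 1 hTT p
    rw [real_inner_comm (T p) (fderiv ℝ T p (1, 0))] at h0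
    have : (⟪T p, Tu p⟫ : ℝ) + ⟪T p, Tu p⟫ = 0 := h0
    linarith
  have hTN : ∀ p, (⟪T p, N p⟫ : ℝ) = 0 := by
    intro p
    have h0 := hTTu p
    rw [hTuN p, real_inner_smul_right] at h0
    exact (mul_eq_zero.1 h0).resolve_left (hgκne p)
  have hTB : ∀ p, (⟪T p, B p⟫ : ℝ) = 0 := by
    intro p; simp only [hBfun]; exact inner_cross3_left _ _
  have hNB : ∀ p, (⟪N p, B p⟫ : ℝ) = 0 := by
    intro p; simp only [hBfun]; exact inner_cross3_right _ _
  have hTuB : ∀ p, (⟪Tu p, B p⟫ : ℝ) = 0 := by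
    intro p
    rw [hTuN p, real_inner_smul_left, hNB p, mul_zero]
  have hTuNip : ∀ p, (⟪Tu p, N p⟫ : ℝ) = g p * κ p := by
    intro p
    rw [hTuN p, real_inner_smul_left, hNN p, mul_one]
  have hTNu : ∀ p, (⟪T p, Nu p⟫ : ℝ) = -(g p * κ p) := by
    intro p
    have h0 := hinner0 T N hTd hNd 0 hTN p
    have h1 : (⟪fderiv ℝ T p (1, 0), N p⟫ : ℝ) = g p * κ p := hTuNip p
    rw [h1] at h0
    linarith
  have hTBu : ∀ p, (⟪T p, Bu p⟫ : ℝ) = 0 := by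
    intro p
    have h0 := hinner0 T B hTd hBd 0 hTB p
    have h1 : (⟪fderiv ℝ T p (1, 0), B p⟫ : ℝ) = 0 := hTuB p
    rw [h1] at h0
    linarith
  -- time derivative of X
  set Xt : ℝ × ℝ → EuclideanSpace ℝ (Fin 3) := fun p => fderiv ℝ X p (0, 1) with hXtdef
  have hXtsm : ContDiff ℝ (⊤ : ℕ∞) Xt := contDiff_fderiv_apply hX _
  have hXtflow : Xt = fun p => vN p • N p + vB p • B p + vT p • T p :=
    funext fun p => by simp only [hXtdef]; rw [← pt_eq (hXd p)]; exact hflow p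
  have hXtu : ∀ p, fderiv ℝ Xt p (1, 0)
      = (vN p • Nu p + fderiv ℝ vN p (1, 0) • N p)
      + (vB p • Bu p + fderiv ℝ vB p (1, 0) • B p)
      + (vT p • Tu p + fderiv ℝ vT p (1, 0) • T p) := by
    intro p
    have h1 : HasDerivAt (fun u => Xt (u, p.2)) (fderiv ℝ Xt p (1, 0)) p.1 :=
      hasDerivAt_slice1 ((hXtsm.differentiable (by simp)) p)
    have h2 : HasDerivAt (fun u => Xt (u, p.2))
        ((vN p • Nu p + fderiv ℝ vN p (1, 0) • N p)
        + (vB p • Bu p + fderiv ℝ vB p (1, 0) • B p)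
        + (vT p • Tu p + fderiv ℝ vT p (1, 0) • T p)) p.1 := by
      have e : (fun u => Xt (u, p.2)) = fun u =>
          vN (u, p.2) • N (u, p.2) + vB (u, p.2) • B (u, p.2) + vT (u, p.2) • T (u, p.2) := by
        funext u; rw [hXtflow]
      rw [e]
      exact (((hasDerivAt_slice1 ((hvN.differentiable (by simp)) p)).smul
          (hasDerivAt_slice1 (hNd p))).add
        ((hasDerivAt_slice1 ((hvB.differentiable (by simp)) p)).smul
          (hasDerivAt_slice1 (hBd p)))).add
        ((hasDerivAt_slice1 ((hvT.differentiable (by simp)) p)).smul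
          (hasDerivAt_slice1 (hTd p)))
    exact h1.unique h2
  -- formula for the time derivative of g
  have hgtT : ∀ p, fderiv ℝ g p (0, 1) = ⟪T p, fderiv ℝ Xt p (1, 0)⟫ := by
    intro p
    have hsym : fderiv ℝ Xu p (0, 1) = fderiv ℝ Xt p (1, 0) := second_symm hX p (1, 0) (0, 1)
    have h1 : HasDerivAt (fun t' => (⟪Xu (p.1, t'), Xu (p.1, t')⟫ : ℝ))
        (⟪Xu p, fderiv ℝ Xu p (0, 1)⟫ + ⟪fderiv ℝ Xu p (0, 1), Xu p⟫) p.2 :=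
      (hasDerivAt_slice2 ((hXusm.differentiable (by simp)) p)).inner ℝ
        (hasDerivAt_slice2 ((hXusm.differentiable (by simp)) p))
    have h2 : HasDerivAt (fun t' => g (p.1, t') ^ 2)
        (2 * g p ^ 1 * fderiv ℝ g p (0, 1)) p.2 := by
      exact_mod_cast (hasDerivAt_slice2 (hgd p)).pow 2
    have e : (fun t' => (⟪Xu (p.1, t'), Xu (p.1, t')⟫ : ℝ)) = fun t' => g (p.1, t') ^ 2 := by
      funext t'
      rw [real_inner_self_eq_norm_sq]
      simp only [hgfun]
    rw [e] at h1
    have huniq := h2.unique h1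
    rw [real_inner_comm (Xu p) (fderiv ℝ Xu p (0, 1))] at huniq
    have hXuT : (⟪Xu p, fderiv ℝ Xu p (0, 1)⟫ : ℝ) = g p * ⟪T p, fderiv ℝ Xu p (0, 1)⟫ := by
      simp only [hTfun, real_inner_smul_left]
      rw [← mul_assoc, mul_inv_cancel₀ (hgne p), one_mul]
    rw [hXuT] at huniq
    have h3 : (2 * g p) * fderiv ℝ g p (0, 1)
        = (2 * g p) * (⟪T p, fderiv ℝ Xu p (0, 1)⟫ : ℝ) := by
      rw [pow_one] at huniq
      linarith [huniq]
    rw [← hsym]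
    exact mul_left_cancel₀ (mul_ne_zero two_ne_zero (hgne p)) h3
  have hgtval : ∀ p, fderiv ℝ g p (0, 1)
      = fderiv ℝ vT p (1, 0) - vN p * (g p * κ p) := by
    intro p
    rw [hgtT p, hXtu p]
    simp only [inner_add_right, real_inner_smul_right, hTN p, hTB p, hTT p, hTTu p,
      hTNu p, hTBu p]
    ring
  -- positivity of L
  have hgcont : Continuous g := hgsm.continuous
  have hgslice : ∀ t : ℝ, Continuous fun u => g (u, t) := fun t =>
    hgcont.comp (continuous_id.prodMk continuous_const)
  have hLpos : ∀ t, 0 < L t := by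
    intro t
    rw [hL t]
    apply intervalIntegral.intervalIntegral_pos_of_pos_on
    · exact (hgslice t).intervalIntegrable 0 1
    · exact fun u _ => hgpos (u, t)
    · norm_num
  have hLne : ∀ t, L t ≠ 0 := fun t => (hLpos t).ne'
  -- pointwise ODE for g
  have hgteq : ∀ p : ℝ × ℝ, fderiv ℝ g p (0, 1)
      = -(g p * (L p.2)⁻¹ * (∫ u in (0:ℝ)..1, κ (u, p.2) * vN (u, p.2) * g (u, p.2)))
        + (L p.2 - g p) * ω := by
    intro p
    have h0 := hredis p
    have hDsvT : Ds X vT p = (g p)⁻¹ * fderiv ℝ vT p (1, 0) := by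
      unfold Ds
      rw [hg p, pu_eq ((hvT.differentiable (by simp)) p)]
      simp [smul_eq_mul]
    rw [hDsvT] at h0
    have hgp := hgne p
    have hLp := hLne p.2
    have hvTu : fderiv ℝ vT p (1, 0)
        = g p * κ p * vN p
          - g p * (L p.2)⁻¹ * (∫ u in (0:ℝ)..1, κ (u, p.2) * vN (u, p.2) * g (u, p.2))
          + (L p.2 - g p) * ω := by
      have h0' := congrArg (fun x => g p * x) h0
      rw [← mul_assoc, mul_inv_cancel₀ hgp, one_mul] at h0'
      rw [h0']
      field_simp
    rw [hgtval p, hvTu]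
    ring
  -- derivative of L
  have hgt_cont : Continuous fun p : ℝ × ℝ => fderiv ℝ g p (0, 1) :=
    (contDiff_fderiv_apply hgsm _).continuous
  have hL' : ∀ t : ℝ, HasDerivAt L
      (-(∫ u in (0:ℝ)..1, κ (u, t) * vN (u, t) * g (u, t))) t := by
    intro t
    have hK : IsCompact (Set.Icc (0:ℝ) 1 ×ˢ Set.Icc (t - 1) (t + 1)) :=
      isCompact_Icc.prod isCompact_Icc
    have hKne : (Set.Icc (0:ℝ) 1 ×ˢ Set.Icc (t - 1) (t + 1)).Nonempty :=
      ⟨(0, t), Set.mem_prod.2 ⟨⟨le_refl 0, zero_le_one⟩, ⟨by linarith, by linarith⟩⟩⟩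
    obtain ⟨q0, _, hq0⟩ := hK.exists_isMaxOn hKne
      ((continuous_abs.comp hgt_cont).continuousOn)
    set C : ℝ := |fderiv ℝ g q0 (0, 1)| with hCdef
    have key := intervalIntegral.hasDerivAt_integral_of_dominated_loc_of_deriv_le
      (F := fun t' u => g (u, t')) (F' := fun t' u => fderiv ℝ g (u, t') (0, 1))
      (x₀ := t) (a := (0:ℝ)) (b := (1:ℝ)) (bound := fun _ => C) (μ := MeasureTheory.volume)
      (Metric.ball_mem_nhds t one_pos)
      (Filter.Eventually.of_forall fun t' => ((hgslice t').aestronglyMeasurable))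
      ((hgslice t).intervalIntegrable 0 1)
      ((hgt_cont.comp (continuous_id.prodMk continuous_const)).aestronglyMeasurable)
      ?_ (intervalIntegrable_const) ?_
    · have hfun : L = fun t' => ∫ u in (0:ℝ)..1, g (u, t') := funext hL
      have hval : (∫ u in (0:ℝ)..1, fderiv ℝ g (u, t) (0, 1))
          = -(∫ u in (0:ℝ)..1, κ (u, t) * vN (u, t) * g (u, t)) := by
        have e1 : Set.EqOn (fun u : ℝ => fderiv ℝ g (u, t) (0, 1))
            (fun u : ℝ => (-((L t)⁻¹ * (∫ u in (0:ℝ)..1, κ (u, t) * vN (u, t) * g (u, t))) - ω)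
              * g (u, t) + L t * ω) (Set.uIcc 0 1) := by
          intro u _
          simp only [hgteq (u, t)]
          ring
        rw [intervalIntegral.integral_congr e1]
        rw [intervalIntegral.integral_add (f := fun x => (-((L t)⁻¹ * (∫ u in (0:ℝ)..1, κ (u, t) * vN (u, t) * g (u, t))) - ω) * g (x, t))
          ((continuous_const.mul (hgslice t)).intervalIntegrable 0 1) intervalIntegrable_const]
        rw [intervalIntegral.integral_const_mul, intervalIntegral.integral_const, ← hL t]
        have hLt := hLne t
        simp only [smul_eq_mul]
        field_simp
        ring
      rw [hfun, ← hval]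
      exact key.2
    · refine Filter.Eventually.of_forall fun u hu x hx => ?_
      have hx' : x ∈ Set.Icc (t - 1) (t + 1) := by
        have hd := Metric.mem_ball.1 hx
        rw [Real.dist_eq] at hd
        have h1 := abs_lt.1 hd
        exact ⟨by linarith [h1.1], by linarith [h1.2]⟩
      have hu' : u ∈ Set.Icc (0:ℝ) 1 := by
        have : u ∈ Set.Ioc (0:ℝ) 1 := by
          simpa [Set.uIoc_of_le (zero_le_one : (0:ℝ) ≤ 1)] using hu
        exact ⟨le_of_lt this.1, this.2⟩
      have := hq0 (Set.mk_mem_prod hu' hx')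
      simpa [Real.norm_eq_abs] using this
    · exact Filter.Eventually.of_forall fun u _ x _ => hasDerivAt_slice2 (hgd (u, x))
  -- Part 1
  have part1 : ∀ u t : ℝ, HasDerivAt (fun t' => g (u, t') / L t')
      (ω * (1 - g (u, t) / L t)) t := by
    intro u t
    have h1 : HasDerivAt (fun t' => g (u, t')) (fderiv ℝ g (u, t) (0, 1)) t :=
      hasDerivAt_slice2 (hgd (u, t))
    have h3 : HasDerivAt (fun t' => g (u, t') / L t') _ t := h1.div (hL' t) (hLne t)
    convert h3 using 1
    rw [hgteq (u, t)]
    have hLt := hLne t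
    field_simp
    ring
  refine ⟨part1, ?_⟩
  -- explicit solution of the ODE
  have hsol : ∀ u t : ℝ, g (u, t) / L t - 1
      = (g (u, 0) / L 0 - 1) * Real.exp (-(ω * t)) := by
    intro u t
    have hFd : ∀ s : ℝ, HasDerivAt
        (fun t' => (g (u, t') / L t' - 1) * Real.exp (ω * t')) 0 s := by
      intro s
      have h1 := (part1 u s).sub_const 1
      have h2 : HasDerivAt (fun t' : ℝ => Real.exp (ω * t')) (Real.exp (ω * s) * ω) s := by
        simpa [Function.comp_def] using (Real.hasDerivAt_exp (ω * s)).comp s ((hasDerivAt_id s).const_mul ω)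
      have h3 : HasDerivAt (fun t' => (g (u, t') / L t' - 1) * Real.exp (ω * t')) _ s := h1.mul h2
      convert h3 using 1
      ring
    have hconst := is_const_of_deriv_eq_zero (𝕜 := ℝ)
      (fun s => (hFd s).differentiableAt) (fun s => (hFd s).deriv) t 0
    simp only [mul_zero, Real.exp_zero, mul_one] at hconst
    have hexp : Real.exp (ω * t) ≠ 0 := (Real.exp_pos _).ne'
    rw [Real.exp_neg, ← hconst, mul_assoc, mul_inv_cancel₀ hexp, mul_one]
  -- uniform convergence
  obtain ⟨q0, _, hq0⟩ := (isCompact_Icc : IsCompact (Set.Icc (0:ℝ) 1)).exists_isMaxOn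
    ⟨0, by norm_num⟩
    ((continuous_abs.comp (((hgslice 0).div_const (L 0)).sub continuous_const)).continuousOn)
  set M : ℝ := |g (q0, 0) / L 0 - 1| with hMdef
  rw [Metric.tendstoUniformlyOn_iff]
  intro ε hε
  have htend : Filter.Tendsto (fun t : ℝ => M * Real.exp (-(ω * t)))
      Filter.atTop (nhds 0) := by
    have h1 : Filter.Tendsto (fun t : ℝ => ω * t) Filter.atTop Filter.atTop :=
      Filter.Tendsto.const_mul_atTop hω Filter.tendsto_id
    have h2 := Real.tendsto_exp_neg_atTop_nhds_zero.comp h1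
    simpa using h2.const_mul M
  filter_upwards [htend.eventually_lt_const hε] with t ht u hu
  have hdist : dist (1:ℝ) (g (u, t) / L t) = |g (u, t) / L t - 1| := by
    rw [dist_comm, Real.dist_eq]
  rw [hdist, hsol u t, abs_mul, Real.abs_exp]
  calc |g (u, 0) / L 0 - 1| * Real.exp (-(ω * t))
      ≤ M * Real.exp (-(ω * t)) :=
        mul_le_mul_of_nonneg_right (hq0 hu) (Real.exp_pos _).le
    _ < ε := ht
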